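/- Let f : ℝ^n → ℝ be differentiable with gradient ∇f, attain its minimum value f* at a unique minimizer x*, and satisfy the PL inequality (1/2)‖∇f(x)‖² ≥ μ(f(x) − f*) for all x, with μ > 0. Let c1, c2 > 0, p1 > 2, p2 ∈ (1,2), and set α := p1/(2(p1−1)), β := p2/(2(p2−1)), p := c1(2μ)^α, q := c2(2μ)^β, T := 1/(p(1−α)) + 1/(q(β−1)). Then every differentiable solution x : ℝ → ℝ^n of the FxTS-GF dynamics, for any initial condition x(0) ∈ ℝ^n, satisfies x(t) = x* for all t ≥ T. -/

import Mathlib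

/-!
Along a trajectory, `V = f ∘ x - f*` decreases at rate `c₁‖∇f‖^{2α} + c₂‖∇f‖^{2β}`, which the
PL inequality bounds below by `p V^α + q V^β`. While `V ≥ 1` the term `q V^β` (with `β > 1`)
dominates: `V^{1-β}` grows at least at rate `q(β-1)`, so from any initial value `V` drops below
`1` by time `1/(q(β-1))`. Afterwards the term `p V^α` (with `α < 1`) makes `V^{1-α}` decrease
at least at rate `p(1-α)`, so `V` vanishes within a further time `1/(p(1-α))`. Uniqueness of
the minimizer turns `V = 0` into `x = x*`.
-/

open Set

section Gradient

variable {E : Type*} [NormedAddCommGroup E] [InnerProductSpace ℝ E]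

theorem HasGradientAt.comp_hasDerivAt [CompleteSpace E] {f : E → ℝ} {g v : E} {x : ℝ → E}
    {t : ℝ} (hf : HasGradientAt f g (x t)) (hx : HasDerivAt x v t) :
    HasDerivAt (fun s => f (x s)) (inner ℝ g v) t :=
  hf.hasFDerivAt.comp_hasDerivAt t hx

/-- The right-hand side of the FxTS-GF dynamics, as a function of the gradient `g`. -/
noncomputable def fxtsField [DecidableEq E] (c₁ c₂ r₁ r₂ : ℝ) (g : E) : E :=
  if g = 0 then 0 else -(c₁ / ‖g‖ ^ r₁) • g - (c₂ / ‖g‖ ^ r₂) • g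

theorem inner_fxtsField [DecidableEq E] {c₁ c₂ r₁ r₂ : ℝ} (hr₁ : 2 - r₁ ≠ 0) (hr₂ : 2 - r₂ ≠ 0)
    (g : E) :
    inner ℝ g (fxtsField c₁ c₂ r₁ r₂ g) = -(c₁ * ‖g‖ ^ (2 - r₁) + c₂ * ‖g‖ ^ (2 - r₂)) := by
  by_cases hg : g = 0
  · simp [fxtsField, hg, Real.zero_rpow hr₁, Real.zero_rpow hr₂]
  have hN : 0 < ‖g‖ := norm_pos_iff.2 hg
  have hsq : ‖g‖ ^ (2 : ℕ) = ‖g‖ ^ (2 : ℝ) := (Real.rpow_natCast _ 2).symm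
  rw [fxtsField, if_neg hg, inner_sub_right, real_inner_smul_right, real_inner_smul_right,
    real_inner_self_eq_norm_sq, hsq, Real.rpow_sub hN, Real.rpow_sub hN]
  ring

end Gradient

theorem two_sub_div_sub_one {r : ℝ} (hr : r ≠ 1) :
    2 - (r - 2) / (r - 1) = 2 * (r / (2 * (r - 1))) := by
  field_simp [sub_ne_zero.2 hr]
  ring

theorem rpow_mul_rpow_le_rpow_two_mul {a v N γ : ℝ} (ha : 0 ≤ a) (hv : 0 ≤ v) (hN : 0 ≤ N)
    (hγ : 0 ≤ γ) (h : a * v ≤ N ^ 2) : a ^ γ * v ^ γ ≤ N ^ (2 * γ) := by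
  rw [← Real.mul_rpow ha hv, Real.rpow_mul hN, Real.rpow_two]
  exact Real.rpow_le_rpow (mul_nonneg ha hv) h hγ

section ScalarComparison

variable {V W : ℝ → ℝ}

theorem antitoneOn_of_hasDerivAt_nonpos {D : Set ℝ} (hD : Convex ℝ D)
    (hV : ∀ s ∈ D, HasDerivAt V (W s) s) (hW : ∀ s ∈ D, W s ≤ 0) : AntitoneOn V D :=
  antitoneOn_of_hasDerivWithinAt_nonpos hD
    (fun s hs => (hV s hs).continuousAt.continuousWithinAt)
    (fun s hs => (hV s (interior_subset hs)).hasDerivWithinAt)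
    (fun s hs => hW s (interior_subset hs))

/-- Separation of variables for `V' ≤ -k V^γ`: the primitive `V^{1-γ}/(1-γ)` of `V^{-γ}`
decreases at least at rate `k`. -/
theorem rpow_one_sub_div_add_mul_le {k γ a b : ℝ} (hγ : γ ≠ 1) (hab : a ≤ b)
    (hpos : ∀ s ∈ Icc a b, 0 < V s) (hV : ∀ s ∈ Icc a b, HasDerivAt V (W s) s)
    (hW : ∀ s ∈ Icc a b, W s ≤ -(k * V s ^ γ)) :
    V b ^ (1 - γ) / (1 - γ) + k * b ≤ V a ^ (1 - γ) / (1 - γ) + k * a := by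
  have hγ' : 1 - γ ≠ 0 := sub_ne_zero.2 hγ.symm
  have hderiv : ∀ s ∈ Icc a b, HasDerivAt (fun u => V u ^ (1 - γ) / (1 - γ) + k * u)
      (W s * V s ^ (-γ) + k) s := by
    intro s hs
    have h := (((hV s hs).rpow_const (p := 1 - γ) (Or.inl (hpos s hs).ne')).div_const
      (1 - γ)).add ((hasDerivAt_id s).const_mul k)
    refine h.congr_deriv ?_
    rw [sub_sub_cancel_left]
    field_simp
  have hrate : ∀ s ∈ Icc a b, W s * V s ^ (-γ) + k ≤ 0 := by
    intro s hs
    have hcancel : V s ^ γ * V s ^ (-γ) = 1 := by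
      rw [← Real.rpow_add (hpos s hs), add_neg_cancel, Real.rpow_zero]
    have := mul_le_mul_of_nonneg_right (hW s hs) (Real.rpow_pos_of_pos (hpos s hs) (-γ)).le
    linear_combination this - k * hcancel
  exact antitoneOn_of_hasDerivAt_nonpos (convex_Icc a b) hderiv hrate
    (left_mem_Icc.2 hab) (right_mem_Icc.2 hab) hab

theorem lt_one_of_hasDerivAt_le_neg_rpow {q β a b : ℝ} (hq : 0 < q) (hβ : 1 < β)
    (hab : 1 / (q * (β - 1)) ≤ b - a) (hpos : ∀ s ∈ Icc a b, 0 < V s)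
    (hV : ∀ s ∈ Icc a b, HasDerivAt V (W s) s) (hW : ∀ s ∈ Icc a b, W s ≤ -(q * V s ^ β)) :
    V b < 1 := by
  have hab' : a ≤ b := by linarith [one_div_pos.2 (mul_pos hq (by linarith : 0 < β - 1))]
  have h := rpow_one_sub_div_add_mul_le hβ.ne' hab' hpos hV hW
  rw [div_add' _ _ _ (by linarith), div_add' _ _ _ (by linarith),
    div_le_div_right_of_neg (by linarith)] at h
  rw [div_le_iff₀ (mul_pos hq (by linarith))] at hab
  have hVa : 0 < V a ^ (1 - β) := Real.rpow_pos_of_pos (hpos a (left_mem_Icc.2 hab')) _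
  by_contra! hge
  nlinarith [Real.rpow_le_one_of_one_le_of_nonpos hge (by linarith : 1 - β ≤ 0)]

theorem sub_lt_of_hasDerivAt_le_neg_rpow {p α a b : ℝ} (hp : 0 < p) (hα : α < 1) (hab : a ≤ b)
    (ha : V a < 1) (hpos : ∀ s ∈ Icc a b, 0 < V s) (hV : ∀ s ∈ Icc a b, HasDerivAt V (W s) s)
    (hW : ∀ s ∈ Icc a b, W s ≤ -(p * V s ^ α)) :
    b - a < 1 / (p * (1 - α)) := by
  have h := rpow_one_sub_div_add_mul_le hα.ne hab hpos hV hW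
  rw [div_add' _ _ _ (by linarith), div_add' _ _ _ (by linarith),
    div_le_div_iff_of_pos_right (by linarith)] at h
  have hVa : V a ^ (1 - α) < 1 :=
    Real.rpow_lt_one (hpos a (left_mem_Icc.2 hab)).le ha (by linarith)
  have hVb : 0 < V b ^ (1 - α) := Real.rpow_pos_of_pos (hpos b (right_mem_Icc.2 hab)) _
  rw [lt_div_iff₀ (mul_pos hp (by linarith))]
  nlinarith

theorem eq_zero_of_hasDerivAt_le_neg_rpow_add_rpow {p q α β t : ℝ} (hp : 0 < p) (hq : 0 < q)
    (hα : α < 1) (hβ : 1 < β) (hV₀ : ∀ s, 0 ≤ s → 0 ≤ V s)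
    (hV : ∀ s, 0 ≤ s → HasDerivAt V (W s) s)
    (hW : ∀ s, 0 ≤ s → W s ≤ -(p * V s ^ α + q * V s ^ β))
    (ht : 1 / (p * (1 - α)) + 1 / (q * (β - 1)) ≤ t) : V t = 0 := by
  set T₁ := 1 / (q * (β - 1))
  have hT₁ : 0 < T₁ := one_div_pos.2 (mul_pos hq (by linarith))
  have hT₂ : 0 < 1 / (p * (1 - α)) := one_div_pos.2 (mul_pos hp (by linarith))
  have hterms : ∀ s, 0 ≤ s → 0 ≤ p * V s ^ α ∧ 0 ≤ q * V s ^ β := fun s hs =>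
    ⟨mul_nonneg hp.le (Real.rpow_nonneg (hV₀ s hs) α),
      mul_nonneg hq.le (Real.rpow_nonneg (hV₀ s hs) β)⟩
  have hanti : AntitoneOn V (Ici 0) := antitoneOn_of_hasDerivAt_nonpos (convex_Ici 0) hV
    fun s hs => by linarith [hW s hs, hterms s hs]
  by_contra hne
  have hVt : 0 < V t := (hV₀ t (by linarith)).lt_of_ne (Ne.symm hne)
  have hpos : ∀ s ∈ Icc 0 t, 0 < V s := fun s hs =>
    hVt.trans_le (hanti hs.1 (mem_Ici.2 (by linarith)) hs.2)
  have hsub₁ : Icc 0 T₁ ⊆ Icc 0 t := Icc_subset_Icc_right (by linarith)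
  have hsub₂ : Icc T₁ t ⊆ Icc 0 t := Icc_subset_Icc_left hT₁.le
  have hVT₁ : V T₁ < 1 := lt_one_of_hasDerivAt_le_neg_rpow hq hβ (by rw [sub_zero])
    (fun s hs => hpos s (hsub₁ hs)) (fun s hs => hV s (hsub₁ hs).1)
    (fun s hs => by linarith [hW s (hsub₁ hs).1, hterms s (hsub₁ hs).1])
  have hlate := sub_lt_of_hasDerivAt_le_neg_rpow hp hα (by linarith) hVT₁
    (fun s hs => hpos s (hsub₂ hs)) (fun s hs => hV s (hsub₂ hs).1)
    (fun s hs => by linarith [hW s (hsub₂ hs).1, hterms s (hsub₂ hs).1])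
  linarith

end ScalarComparison

theorem stmt_4_general (n : ℕ) (f : EuclideanSpace ℝ (Fin n) → ℝ)
    (f' : EuclideanSpace ℝ (Fin n) → EuclideanSpace ℝ (Fin n))
    (hgrad : ∀ y, HasGradientAt f (f' y) y)
    (xstar : EuclideanSpace ℝ (Fin n)) (fstar μ : ℝ) (hμ : 0 < μ)
    (hmin : ∀ y, fstar ≤ f y)
    (huniq : ∀ y, f y = fstar → y = xstar)
    (hPL : ∀ y, μ * (f y - fstar) ≤ (1 / 2) * ‖f' y‖ ^ 2)
    (c1 c2 p1 p2 : ℝ) (hc1 : 0 < c1) (hc2 : 0 < c2)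
    (hp1 : 2 < p1) (hp2 : p2 ∈ Set.Ioo (1 : ℝ) 2)
    (α β p q T : ℝ)
    (hα : α = p1 / (2 * (p1 - 1))) (hβ : β = p2 / (2 * (p2 - 1)))
    (hpdef : p = c1 * (2 * μ) ^ α) (hqdef : q = c2 * (2 * μ) ^ β)
    (hT : T = 1 / (p * (1 - α)) + 1 / (q * (β - 1))) :
    ∀ x : ℝ → EuclideanSpace ℝ (Fin n),
      (∀ t, 0 ≤ t → HasDerivAt x
        (if f' (x t) = 0 then 0 else
          -(c1 / ‖f' (x t)‖ ^ ((p1 - 2) / (p1 - 1))) • f' (x t)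
            - (c2 / ‖f' (x t)‖ ^ ((p2 - 2) / (p2 - 1))) • f' (x t)) t) →
      ∀ t, T ≤ t → x t = xstar := by
  intro x hx t ht
  obtain ⟨hp2₁, hp2₂⟩ := hp2
  have hα₀ : 0 < α := by rw [hα]; exact div_pos (by linarith) (by linarith)
  have hβ₀ : 0 < β := by rw [hβ]; exact div_pos (by linarith) (by linarith)
  have hα₁ : α < 1 := by rw [hα, div_lt_one (by linarith)]; linarith
  have hβ₁ : 1 < β := by rw [hβ, lt_div_iff₀ (by linarith)]; linarith
  have hexp₁ : 2 - (p1 - 2) / (p1 - 1) = 2 * α := hα ▸ two_sub_div_sub_one (by linarith)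
  have hexp₂ : 2 - (p2 - 2) / (p2 - 1) = 2 * β := hβ ▸ two_sub_div_sub_one (by linarith)
  set V : ℝ → ℝ := fun s => f (x s) - fstar
  have hV : ∀ s, 0 ≤ s → HasDerivAt V
      (-(c1 * ‖f' (x s)‖ ^ (2 * α) + c2 * ‖f' (x s)‖ ^ (2 * β))) s := by
    intro s hs
    have hxs : HasDerivAt x
        (fxtsField c1 c2 ((p1 - 2) / (p1 - 1)) ((p2 - 2) / (p2 - 1)) (f' (x s))) s := hx s hs
    have h := ((hgrad (x s)).comp_hasDerivAt hxs).sub_const fstar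
    rwa [inner_fxtsField (hexp₁ ▸ by positivity) (hexp₂ ▸ by positivity), hexp₁, hexp₂] at h
  have hW : ∀ s, 0 ≤ s → -(c1 * ‖f' (x s)‖ ^ (2 * α) + c2 * ‖f' (x s)‖ ^ (2 * β))
      ≤ -(p * V s ^ α + q * V s ^ β) := by
    intro s _
    have hPLs : 2 * μ * V s ≤ ‖f' (x s)‖ ^ 2 := by linarith [hPL (x s)]
    have hVs : 0 ≤ V s := sub_nonneg.2 (hmin _)
    have h₁ := rpow_mul_rpow_le_rpow_two_mul (by linarith) hVs (norm_nonneg _) hα₀.le hPLs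
    have h₂ := rpow_mul_rpow_le_rpow_two_mul (by linarith) hVs (norm_nonneg _) hβ₀.le hPLs
    rw [hpdef, hqdef]
    linarith [mul_le_mul_of_nonneg_left h₁ hc1.le, mul_le_mul_of_nonneg_left h₂ hc2.le]
  have hp : 0 < p := hpdef ▸ mul_pos hc1 (Real.rpow_pos_of_pos (by linarith) α)
  have hq : 0 < q := hqdef ▸ mul_pos hc2 (Real.rpow_pos_of_pos (by linarith) β)
  have hVt : V t = 0 := eq_zero_of_hasDerivAt_le_neg_rpow_add_rpow hp hq hα₁ hβ₁
    (fun s _ => sub_nonneg.2 (hmin _)) hV hW (hT ▸ ht)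
  exact huniq _ (sub_eq_zero.1 hVt)

/-- Theorem 1, FxTS-GF: under the PL inequality, every solution of
the FxTS-GF dynamics reaches the unique minimizer `x*` within the fixed time
`T = 1/(p(1-α)) + 1/(q(β-1))`, independently of the initial condition. -/
theorem stmt_4 (n : ℕ) (f : EuclideanSpace ℝ (Fin n) → ℝ)
    (f' : EuclideanSpace ℝ (Fin n) → EuclideanSpace ℝ (Fin n))
    (hgrad : ∀ y, HasGradientAt f (f' y) y)
    (xstar : EuclideanSpace ℝ (Fin n)) (fstar μ : ℝ) (hμ : 0 < μ)
    (hfstar : f xstar = fstar) (hmin : ∀ y, fstar ≤ f y)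
    (huniq : ∀ y, f y = fstar → y = xstar)
    (hPL : ∀ y, μ * (f y - fstar) ≤ (1 / 2) * ‖f' y‖ ^ 2)
    (c1 c2 p1 p2 : ℝ) (hc1 : 0 < c1) (hc2 : 0 < c2)
    (hp1 : 2 < p1) (hp2 : p2 ∈ Set.Ioo (1 : ℝ) 2)
    (α β p q T : ℝ)
    (hα : α = p1 / (2 * (p1 - 1))) (hβ : β = p2 / (2 * (p2 - 1)))
    (hpdef : p = c1 * (2 * μ) ^ α) (hqdef : q = c2 * (2 * μ) ^ β)
    (hT : T = 1 / (p * (1 - α)) + 1 / (q * (β - 1))) :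
    ∀ x : ℝ → EuclideanSpace ℝ (Fin n),
      (∀ t, 0 ≤ t → HasDerivAt x
        (if f' (x t) = 0 then 0 else
          -(c1 / ‖f' (x t)‖ ^ ((p1 - 2) / (p1 - 1))) • f' (x t)
            - (c2 / ‖f' (x t)‖ ^ ((p2 - 2) / (p2 - 1))) • f' (x t)) t) →
      ∀ t, T ≤ t → x t = xstar :=
  stmt_4_general n f f' hgrad xstar fstar μ hμ hmin huniq hPL c1 c2 p1 p2 hc1 hc2 hp1 hp2 α β p q T
    hα hβ hpdef hqdef hT
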